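/- arXiv:1903.09443 — 4 statements merged into one kernel-verified Lean document; each statement's English description precedes it below -/
import Mathlib

section
/- For every t in ((5-3√3)/2, 0), the points α(t) and β(t) satisfy 1 < α(t) < β(t), and β(t) - α(t) = 18t²/(-1+t)². -/
open Real Filter Set

noncomputable section

def I6 : Set ℝ := Set.Ioo ((5 - 3 * Real.sqrt 3) / 2) 0

def w (t : ℝ) : ℝ := Real.sqrt ((-1 + t) * t * (1 + t + 7 * t ^ 2))

def b0 (t : ℝ) : ℝ :=
  2 * Real.sqrt 3 * (-1 + t) ^ 2 * w t *
    (1 - 6*t + 18*t^2 - 16*t^3 - 252*t^4 + 2592*t^5 - 5844*t^6 + 20448*t^7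
      - 15768*t^8 - 219280*t^9 + 942576*t^10 - 893232*t^11 + 2825968*t^12)
    / ((1 + 2*t) ^ 5 * (-1 + 4*t) ^ 3 * (1 - 2*t + 10*t^2) ^ 4)

def b1 (t : ℝ) : ℝ :=
  (-5 + 6*t - 24*t^2 - 4*t^3) *
    (1 - 12*t^2 + 116*t^3 - 756*t^4 + 2520*t^5 + 1212*t^6 - 12744*t^7
      + 69840*t^8 - 309280*t^9 + 700704*t^10 - 709008*t^11 + 788848*t^12)
    / ((1 - 4*t) ^ 2 * (1 + 2*t) ^ 5 * (1 - 2*t + 10*t^2) ^ 4)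

def b2 (t : ℝ) : ℝ :=
  2 * Real.sqrt 3 * (-1 + t) ^ 2 * w t *
    (13 - 102*t + 390*t^2 - 880*t^3 - 288*t^4 + 19296*t^5 - 102792*t^6
      + 390816*t^7 - 939024*t^8 + 1167536*t^9 - 258720*t^10 - 339888*t^11
      + 2720848*t^12)
    / ((1 + 2*t) ^ 5 * (1 - 4*t) ^ 3 * (1 - 2*t + 10*t^2) ^ 4)

def b3 (t : ℝ) : ℝ :=
  -4 * (-1 + t) ^ 5 *
    (5 + 3*t - 6*t^2 + 564*t^3 - 3408*t^4 + 13296*t^5 - 35136*t^6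
      + 107976*t^7 - 130416*t^8 + 243952*t^9)
    / ((1 - 4*t) ^ 2 * (1 + 6*t^2 + 20*t^3) ^ 4)

def b4 (t : ℝ) : ℝ :=
  8 * Real.sqrt 3 * (1 - t) ^ 7 * w t *
    (7 - 25*t + 66*t^2 - 146*t^3 - 64*t^4 + 2580*t^5 - 6800*t^6 + 26252*t^7)
    / ((1 + 2*t) ^ 5 * (-1 + 4*t) ^ 3 * (1 - 2*t + 10*t^2) ^ 4)

def b5 (t : ℝ) : ℝ :=
  -16 * (-1 + t) ^ 10 * (1 + t + 7*t^2) * (1 + 6*t + 12*t^2 + 116*t^3)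
    / ((1 + 2*t) ^ 5 * (1 - 4*t) ^ 2 * (1 - 2*t + 10*t^2) ^ 4)

def b6 (t : ℝ) : ℝ :=
  -32 * Real.sqrt 3 * (-1 + t) ^ 12 * (1 + t + 7*t^2) * w t
    / ((1 + 2*t) ^ 5 * (-1 + 4*t) ^ 3 * (1 - 2*t + 10*t^2) ^ 4)

def Z (t x : ℝ) : ℝ :=
  b0 t + b1 t * x + b2 t * x ^ 2 + b3 t * x ^ 3 + b4 t * x ^ 4
    + b5 t * x ^ 5 + b6 t * x ^ 6

def alphaZ (t : ℝ) : ℝ :=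
  -9 * t ^ 2 / (-1 + t) ^ 2
    + (1 + 2*t) * (1 - 4*t) * (1 - 2*t + 10*t^2)
      / (2 * Real.sqrt 3 * (-1 + t) ^ 2 * w t)

def betaZ (t : ℝ) : ℝ := alphaZ t + 18 * t ^ 2 / (-1 + t) ^ 2

def gammaZ (t : ℝ) : ℝ :=
  (1 - 4*t) * (5 - 6*t + 24*t^2 + 4*t^3)
    / (12 * Real.sqrt 3 * (-1 + t) ^ 2 * w t)

def sZ (t : ℝ) : ℝ :=
  (1 - 4*t) * (1 + 6*t + 12*t^2 + 116*t^3) * w t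
    / (12 * Real.sqrt 3 * (-1 + t) ^ 3 * t * (1 + t + 7*t^2))

def AZ (t : ℝ) : ℝ :=
  (-1 + 4*t) * ((1 + 2*t) - (Real.sqrt 3 / w t) * t * (1 + t + 16*t^2))
    / (4 * (-1 + t) ^ 2)

def CZ (t : ℝ) : ℝ :=
  (1 - 4*t) * ((1 + 2*t) + (Real.sqrt 3 / w t) * t * (1 + t + 16*t^2))
    / (4 * (-1 + t) ^ 2)

def radB (t : ℝ) : ℝ :=
  (2 * Real.sqrt 3 * w t * (1 + 2*t) * (-1 + 4*t)
    + (5 - 26*t + 102*t^2 - 200*t^3 + 524*t^4)) / (1 + t + 7*t^2)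

def radD (t : ℝ) : ℝ :=
  (-2 * Real.sqrt 3 * w t * (1 + 2*t) * (-1 + 4*t)
    + (5 - 26*t + 102*t^2 - 200*t^3 + 524*t^4)) / (1 + t + 7*t^2)

def BZ (t : ℝ) : ℝ := (1 + 2*t) / (4 * (-1 + t) ^ 2) * Real.sqrt (radB t)

def DZ (t : ℝ) : ℝ := (1 + 2*t) / (4 * (-1 + t) ^ 2) * Real.sqrt (radD t)

def z1 (t : ℝ) : ℝ := AZ t - BZ t
def z2 (t : ℝ) : ℝ := CZ t - DZ t
def z3 (t : ℝ) : ℝ := AZ t + BZ t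
def z4 (t : ℝ) : ℝ := CZ t + DZ t

/-!
Write `P = (1 + 2t)(1 - 4t)` and `Q = 1 - 2t + 10t²`. Then
`α(t) - 1 = Q (P - 2√3 ω) / (2√3 (t - 1)² ω)`, and
`P² - 12 ω² = (2t² - 10t - 1)(-10t² + 2t - 1)`.
The second factor is always negative and the first one is negative exactly between the roots
`(5 ± 3√3)/2`, so `P > 2√3 ω` on `I6` and hence `α(t) > 1`.
-/

lemma radicand_pos {t : ℝ} (ht : t < 0) : 0 < (-1 + t) * t * (1 + t + 7 * t ^ 2) :=
  mul_pos (mul_pos_of_neg_of_neg (by linarith) ht) (by nlinarith [sq_nonneg (1 + 14 * t)])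

lemma w_pos {t : ℝ} (ht : t < 0) : 0 < w t :=
  Real.sqrt_pos.mpr (radicand_pos ht)

lemma w_sq {t : ℝ} (ht : t < 0) : w t ^ 2 = (-1 + t) * t * (1 + t + 7 * t ^ 2) :=
  Real.sq_sqrt (radicand_pos ht).le

lemma quadratic_neg_of_mem_I6 {t : ℝ} (ht : t ∈ I6) : 2 * t ^ 2 - 10 * t - 1 < 0 := by
  obtain ⟨hlo, hhi⟩ := ht
  have hs3 : Real.sqrt 3 ^ 2 = 3 := Real.sq_sqrt (by norm_num)
  have hroot : -3 * Real.sqrt 3 < 2 * t - 5 := by linarith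
  nlinarith [Real.sqrt_nonneg 3]

lemma two_sqrt_three_mul_w_sq {t : ℝ} (ht : t < 0) :
    (2 * Real.sqrt 3 * w t) ^ 2 = 12 * ((-1 + t) * t * (1 + t + 7 * t ^ 2)) := by
  rw [mul_pow, mul_pow, Real.sq_sqrt (by norm_num : (0 : ℝ) ≤ 3), w_sq ht]
  ring

lemma two_sqrt_three_mul_w_lt {t : ℝ} (ht : t ∈ I6) :
    2 * Real.sqrt 3 * w t < (1 + 2 * t) * (1 - 4 * t) := by
  have hquad := quadratic_neg_of_mem_I6 ht
  have hneg : -10 * t ^ 2 + 2 * t - 1 < 0 := by nlinarith [sq_nonneg t]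
  have hlo : -1 / 10 < t := by nlinarith [sq_nonneg t]
  have hP : 0 < (1 + 2 * t) * (1 - 4 * t) := mul_pos (by linarith) (by linarith [ht.2])
  refine lt_of_pow_lt_pow_left₀ 2 hP.le ?_
  rw [two_sqrt_three_mul_w_sq ht.2]
  nlinarith [mul_pos_of_neg_of_neg hquad hneg]

lemma alphaZ_sub_one {t : ℝ} (ht : t < 0) :
    alphaZ t - 1 = (1 - 2 * t + 10 * t ^ 2)
      * ((1 + 2 * t) * (1 - 4 * t) - 2 * Real.sqrt 3 * w t)
      / (2 * Real.sqrt 3 * (-1 + t) ^ 2 * w t) := by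
  have hw : w t ≠ 0 := (w_pos ht).ne'
  have ht1 : -1 + t ≠ 0 := by linarith
  unfold alphaZ
  field_simp
  ring

lemma one_lt_alphaZ {t : ℝ} (ht : t ∈ I6) : 1 < alphaZ t := by
  have hQ : 0 < 1 - 2 * t + 10 * t ^ 2 := by nlinarith [sq_nonneg t]
  have hgap := two_sqrt_three_mul_w_lt ht
  have hden : 0 < 2 * Real.sqrt 3 * (-1 + t) ^ 2 * w t := by
    have hw := w_pos ht.2
    have ht1 : -1 + t ≠ 0 := by linarith [ht.2]
    positivity
  have hpos := div_pos (mul_pos hQ (sub_pos.mpr hgap)) hden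
  rw [← alphaZ_sub_one ht.2] at hpos
  linarith

lemma betaZ_sub_alphaZ (t : ℝ) : betaZ t - alphaZ t = 18 * t ^ 2 / (-1 + t) ^ 2 :=
  add_sub_cancel_left _ _

theorem stmt5 : ∀ t ∈ I6,
    1 < alphaZ t ∧ alphaZ t < betaZ t ∧
      betaZ t - alphaZ t = 18 * t ^ 2 / (-1 + t) ^ 2 := by
  intro t ht
  have hgap : 0 < 18 * t ^ 2 / (-1 + t) ^ 2 := by
    have ht0 : t ≠ 0 := ht.2.ne
    have ht1 : -1 + t ≠ 0 := by linarith [ht.2]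
    positivity
  refine ⟨one_lt_alphaZ ht, ?_, betaZ_sub_alphaZ t⟩
  linarith [betaZ_sub_alphaZ t]
end
end

section
/- For every t in ((5-3√3)/2, 0), the derivative of the sextic Zolotarev polynomial vanishes at γ(t): Z'_{6,t}(γ(t)) = 0. -/
open Real Filter Set

noncomputable section

/-!
The coefficients `b0, b2, b4, b6` and the point `gammaZ t` all carry the factor `u = √3 · w t`,
while `b1, b3, b5` are rational in `t`. Hence `Z' (gammaZ t)` involves `u` only through
`u ^ 2 = 3 (t - 1) t (1 + t + 7 t ^ 2)`, and after this substitution the claim is an identity between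
rational functions of `t`.
-/

lemma hasDerivAt_Z (t x : ℝ) :
    HasDerivAt (Z t)
      (b1 t + 2 * b2 t * x + 3 * b3 t * x ^ 2 + 4 * b4 t * x ^ 3 + 5 * b5 t * x ^ 4
        + 6 * b6 t * x ^ 5) x := by
  have hmon (n : ℕ) (c : ℝ) : HasDerivAt (fun y : ℝ => c * y ^ n) (c * (n * x ^ (n - 1))) x :=
    (hasDerivAt_pow n x).const_mul c
  refine (((((((hasDerivAt_id x).const_mul (b1 t)).const_add (b0 t)).add (hmon 2 (b2 t))).add
    (hmon 3 (b3 t))).add (hmon 4 (b4 t))).add (hmon 5 (b5 t))).add (hmon 6 (b6 t))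
    |>.congr_deriv ?_
  push_cast
  ring

lemma sextic_deriv_mul_eq (c₁ c₂ c₃ c₄ c₅ c₆ u r : ℝ) :
    c₁ + 2 * (u * c₂) * (u * r) + 3 * c₃ * (u * r) ^ 2 + 4 * (u * c₄) * (u * r) ^ 3
        + 5 * c₅ * (u * r) ^ 4 + 6 * (u * c₆) * (u * r) ^ 5
      = c₁ + (2 * c₂ * r + 3 * c₃ * r ^ 2) * u ^ 2 + (4 * c₄ * r ^ 3 + 5 * c₅ * r ^ 4) * (u ^ 2) ^ 2
        + 6 * c₆ * r ^ 5 * (u ^ 2) ^ 3 := by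
  ring

section

variable {t : ℝ}

lemma gammaZ_eq_mul (hq : 0 < (-1 + t) * t * (1 + t + 7 * t ^ 2)) :
    gammaZ t = (Real.sqrt 3 * w t) * ((1 - 4 * t) * (5 - 6 * t + 24 * t ^ 2 + 4 * t ^ 3)
      / (36 * (-1 + t) ^ 2 * ((-1 + t) * t * (1 + t + 7 * t ^ 2)))) := by
  have hs2 : Real.sqrt 3 ^ 2 = 3 := Real.sq_sqrt (by norm_num)
  have hw : w t ≠ 0 := (Real.sqrt_pos.mpr hq).ne'
  have h1 : -1 + t ≠ 0 := by rintro h; simp [h] at hq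
  rw [gammaZ, ← Real.sq_sqrt hq.le, ← w, show (36 : ℝ) = 12 * Real.sqrt 3 ^ 2 by rw [hs2]; norm_num]
  field_simp

theorem deriv_Z_gammaZ_eq_zero (hq : 0 < (-1 + t) * t * (1 + t + 7 * t ^ 2))
    (ht : 1 + 2 * t ≠ 0) : deriv (Z t) (gammaZ t) = 0 := by
  have hs : Real.sqrt 3 ≠ 0 := by positivity
  have hw : w t ≠ 0 := (Real.sqrt_pos.mpr hq).ne'
  set u := Real.sqrt 3 * w t with hu
  have hu2 : u ^ 2 = 3 * ((-1 + t) * t * (1 + t + 7 * t ^ 2)) := by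
    rw [mul_pow, Real.sq_sqrt (by norm_num), w, Real.sq_sqrt hq.le]
  have hfactor (b : ℝ) : b = u * (b / u) := by field_simp [hu]
  rw [(hasDerivAt_Z t _).deriv, gammaZ_eq_mul hq, hfactor (b2 t), hfactor (b4 t), hfactor (b6 t),
    sextic_deriv_mul_eq, hu2]
  simp only [b1, b2, b3, b4, b5, b6, hu]
  -- the denominators are stated in the normal form in which `field_simp` looks for them
  have h0 : t ≠ 0 := by rintro rfl; simp at hq
  have h1 : -1 + t ≠ 0 := by rintro h; simp [h] at hq
  have h2 : 1 + t * 2 ≠ 0 := fun h => ht (by linarith)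
  have h4 : -1 + t * 4 ≠ 0 := by
    intro h; obtain rfl : t = 1 / 4 := by linarith
    norm_num at hq
  have h4' : 1 - t * 4 ≠ 0 := fun h => h4 (by linarith)
  have h7 : 1 + t + t ^ 2 * 7 ≠ 0 := by nlinarith
  have h10 : 1 - t * 2 + t ^ 2 * 10 ≠ 0 := by nlinarith
  have h20 : 1 + 6 * t ^ 2 + t ^ 3 * 20 ≠ 0 := by
    rw [show 1 + 6 * t ^ 2 + t ^ 3 * 20 = (1 + t * 2) * (1 - t * 2 + t ^ 2 * 10) by ring]
    exact mul_ne_zero h2 h10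
  field_simp
  ring

end

theorem stmt7 : ∀ t ∈ I6, deriv (Z t) (gammaZ t) = 0 := by
  rintro t ⟨hlo, hhi⟩
  have hsqrt3 : Real.sqrt 3 < 2 := by
    rw [Real.sqrt_lt' (by norm_num)]; norm_num
  apply deriv_Z_gammaZ_eq_zero
  · have : 0 < (-1 + t) * t := mul_pos_of_neg_of_neg (by linarith) hhi
    exact mul_pos this (by nlinarith)
  · linarith
end
end

section
/- For every t in ((5-3√3)/2, 0), the equioscillation points satisfy the first Peherstorfer–Schiefermayr equation: α(t)+β(t)+2(z₁(t)+z₂(t)+z₃(t)+z₄(t)) = (1-4t)(1+6t+12t²+116t³)/(√3(-1+t)²ω). -/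
open Real Filter Set

noncomputable section

/-!
The radicals cancel, since `z₁ + z₃ = 2A` and `z₂ + z₄ = 2C`, and the rational parts cancel in
`α + β`. What remains is a multiple of `1 / (√3 (t - 1)² ω)`, and writing `√3 = 3 / √3` reduces the
identity to `(1 + 2t)(1 - 2t + 10t²) + 6t(1 + t + 16t²) = 1 + 6t + 12t² + 116t³`. No division is
ever cleared, so the identity holds for every real `t`, with both sides `0` where `ω = 0`.
-/

lemma z1_add_z3 (t : ℝ) : z1 t + z3 t = 2 * AZ t := by
  unfold z1 z3
  ring

lemma z2_add_z4 (t : ℝ) : z2 t + z4 t = 2 * CZ t := by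
  unfold z2 z4
  ring

lemma alphaZ_add_betaZ (t : ℝ) :
    alphaZ t + betaZ t
      = (1 + 2*t) * (1 - 4*t) * (1 - 2*t + 10*t^2) / (Real.sqrt 3 * (-1 + t) ^ 2 * w t) := by
  unfold betaZ alphaZ
  generalize (-1 + t) ^ 2 = m
  ring

lemma AZ_add_CZ (t : ℝ) :
    AZ t + CZ t
      = 3 * (1 - 4*t) * t * (1 + t + 16*t^2) / (2 * Real.sqrt 3 * (-1 + t) ^ 2 * w t) := by
  unfold AZ CZ
  conv_lhs => rw [← Real.div_sqrt (x := 3)]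
  generalize (-1 + t) ^ 2 = m
  ring

theorem sum_alphaZ_betaZ_z (t : ℝ) :
    alphaZ t + betaZ t + 2 * (z1 t + z2 t + z3 t + z4 t)
      = (1 - 4*t) * (1 + 6*t + 12*t^2 + 116*t^3)
          / (Real.sqrt 3 * (-1 + t) ^ 2 * w t) := by
  calc alphaZ t + betaZ t + 2 * (z1 t + z2 t + z3 t + z4 t)
      = alphaZ t + betaZ t + 4 * (AZ t + CZ t) := by
        linear_combination 2 * z1_add_z3 t + 2 * z2_add_z4 t
    _ = _ := by
        rw [alphaZ_add_betaZ, AZ_add_CZ]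
        generalize (-1 + t) ^ 2 = m
        ring

theorem stmt12 : ∀ t ∈ I6,
    alphaZ t + betaZ t + 2 * (z1 t + z2 t + z3 t + z4 t)
      = (1 - 4*t) * (1 + 6*t + 12*t^2 + 116*t^3)
          / (Real.sqrt 3 * (-1 + t) ^ 2 * w t) :=
  fun t _ => sum_alphaZ_betaZ_z t
end
end

section
/- As t → 0⁻, the coefficients of the sextic Zolotarev polynomial Z_{6,t} converge to those of -T₅, i.e. lim_{t→0⁻} Z_{6,t}(x) = -(5x - 20x³ + 16x⁵) pointwise in x; in particular b₆(t) → 0, b₄(t) → 0, b₂(t) → 0, b₀(t) → 0, b₅(t) → -16, b₃(t) → 20, b₁(t) → -5. -/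
open Real Filter Set

noncomputable section

/-
All seven coefficients are continuous at `t = 0`: they are rational in `t` and `w t`, `w` is
continuous, and no denominator vanishes at `t = 0`. So the one-sided limits are the values at
`t = 0`. The even coefficients carry the factor `w t`, and `w 0 = 0`; the odd ones evaluate to the
coefficients of `-T₅`.
-/

open Topology

theorem ContinuousAt.tendsto_nhdsWithin_of_eq {X Y : Type*} [TopologicalSpace X]
    [TopologicalSpace Y] {f : X → Y} {a : X} {c : Y} (hf : ContinuousAt f a) (s : Set X)
    (hc : f a = c) : Tendsto f (𝓝[s] a) (𝓝 c) :=
  hc ▸ hf.continuousWithinAt.tendsto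

@[fun_prop]
lemma continuous_w : Continuous w := by
  unfold w; fun_prop

lemma w_zero : w 0 = 0 := by simp [w]

lemma continuousAt_b0 : ContinuousAt b0 0 := by
  unfold b0; exact .div (by fun_prop) (by fun_prop) (by norm_num)

lemma continuousAt_b1 : ContinuousAt b1 0 := by
  unfold b1; exact .div (by fun_prop) (by fun_prop) (by norm_num)

lemma continuousAt_b2 : ContinuousAt b2 0 := by
  unfold b2; exact .div (by fun_prop) (by fun_prop) (by norm_num)

lemma continuousAt_b3 : ContinuousAt b3 0 := by
  unfold b3; exact .div (by fun_prop) (by fun_prop) (by norm_num)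

lemma continuousAt_b4 : ContinuousAt b4 0 := by
  unfold b4; exact .div (by fun_prop) (by fun_prop) (by norm_num)

lemma continuousAt_b5 : ContinuousAt b5 0 := by
  unfold b5; exact .div (by fun_prop) (by fun_prop) (by norm_num)

lemma continuousAt_b6 : ContinuousAt b6 0 := by
  unfold b6; exact .div (by fun_prop) (by fun_prop) (by norm_num)

lemma b0_zero : b0 0 = 0 := by simp [b0, w_zero]

lemma b1_zero : b1 0 = -5 := by norm_num [b1]

lemma b2_zero : b2 0 = 0 := by simp [b2, w_zero]

lemma b3_zero : b3 0 = 20 := by norm_num [b3]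

lemma b4_zero : b4 0 = 0 := by simp [b4, w_zero]

lemma b5_zero : b5 0 = -16 := by norm_num [b5]

lemma b6_zero : b6 0 = 0 := by simp [b6, w_zero]

lemma continuousAt_Z (x : ℝ) : ContinuousAt (fun t => Z t x) 0 := by
  unfold Z
  have := continuousAt_b0; have := continuousAt_b1; have := continuousAt_b2
  have := continuousAt_b3; have := continuousAt_b4; have := continuousAt_b5
  have := continuousAt_b6
  fun_prop

lemma Z_zero (x : ℝ) : Z 0 x = -(5 * x - 20 * x ^ 3 + 16 * x ^ 5) := by
  rw [Z, b0_zero, b1_zero, b2_zero, b3_zero, b4_zero, b5_zero, b6_zero]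
  ring

theorem stmt15 :
    (∀ x : ℝ, Tendsto (fun t => Z t x) (nhdsWithin 0 (Set.Iio 0))
      (nhds (-(5 * x - 20 * x ^ 3 + 16 * x ^ 5)))) ∧
    Tendsto b6 (nhdsWithin 0 (Set.Iio 0)) (nhds 0) ∧
    Tendsto b4 (nhdsWithin 0 (Set.Iio 0)) (nhds 0) ∧
    Tendsto b2 (nhdsWithin 0 (Set.Iio 0)) (nhds 0) ∧
    Tendsto b0 (nhdsWithin 0 (Set.Iio 0)) (nhds 0) ∧
    Tendsto b5 (nhdsWithin 0 (Set.Iio 0)) (nhds (-16)) ∧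
    Tendsto b3 (nhdsWithin 0 (Set.Iio 0)) (nhds 20) ∧
    Tendsto b1 (nhdsWithin 0 (Set.Iio 0)) (nhds (-5)) :=
  ⟨fun x => (continuousAt_Z x).tendsto_nhdsWithin_of_eq _ (Z_zero x),
    continuousAt_b6.tendsto_nhdsWithin_of_eq _ b6_zero,
    continuousAt_b4.tendsto_nhdsWithin_of_eq _ b4_zero,
    continuousAt_b2.tendsto_nhdsWithin_of_eq _ b2_zero,
    continuousAt_b0.tendsto_nhdsWithin_of_eq _ b0_zero,
    continuousAt_b5.tendsto_nhdsWithin_of_eq _ b5_zero,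
    continuousAt_b3.tendsto_nhdsWithin_of_eq _ b3_zero,
    continuousAt_b1.tendsto_nhdsWithin_of_eq _ b1_zero⟩
end
end
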